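/- arXiv:2305.18941 — 10 statements merged into one kernel-verified Lean document; each statement's English description precedes it below -/
import Mathlib

section
/- Let P > 0 and define u1(r1,r2) = r2(1−r1) − r1·P + θ(r1,r2)·(1−r1)(1−r2) for r1, r2 ∈ [0,1], where θ(r1,r2) = 1 if r1 > r2, 1/2 if r1 = r2, 0 if r1 < r2, and u2(r1,r2) = u1(r2,r1). Then the CfR game admits no pure Nash equilibrium: for every (s1,s2) ∈ [0,1]² there exists t ∈ [0,1] such that u1(t,s2) > u1(s1,s2) or u2(s1,t) > u2(s1,s2). -/
/-- Tie-breaking function: 1 if `r1 > r2`, 1/2 if `r1 = r2`, 0 if `r1 < r2`. -/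
noncomputable def theta (r1 r2 : ℝ) : ℝ :=
  if r1 > r2 then 1 else if r1 = r2 then 1 / 2 else 0

/-- Expected utility of Player 1 in the two-player CfR game with penalty `P`
and reward `R = 1`. -/
noncomputable def u1 (P r1 r2 : ℝ) : ℝ :=
  r2 * (1 - r1) - r1 * P + theta r1 r2 * ((1 - r1) * (1 - r2))

/-- Expected utility of Player 2 (by symmetry). -/
noncomputable def u2 (P r1 r2 : ℝ) : ℝ := u1 P r2 r1

lemma u1_of_gt {P r1 r2 : ℝ} (h : r2 < r1) : u1 P r1 r2 = 1 - r1 * (1 + P) := by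
  simp only [u1, theta, if_pos h]
  ring

lemma u1_of_lt {P r1 r2 : ℝ} (h : r1 < r2) : u1 P r1 r2 = r2 * (1 - r1) - r1 * P := by
  simp only [u1, theta, if_neg (not_lt.2 h.le), if_neg h.ne]
  ring

lemma u1_of_eq {P r : ℝ} : u1 P r r = r * (1 - r) - r * P + (1 - r) * (1 - r) / 2 := by
  simp only [u1, theta, if_neg (lt_irrefl r), if_pos rfl]
  norm_num
  ring

theorem stmt1 (P : ℝ) (hP : 0 < P) :
    ∀ s1 ∈ Set.Icc (0 : ℝ) 1, ∀ s2 ∈ Set.Icc (0 : ℝ) 1,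
      ∃ t ∈ Set.Icc (0 : ℝ) 1,
        u1 P t s2 > u1 P s1 s2 ∨ u2 P s1 t > u2 P s1 s2 := by
  intro s1 hs1 s2 hs2
  obtain ⟨h10, h11⟩ := hs1
  obtain ⟨h20, h21⟩ := hs2
  rcases lt_trichotomy s1 s2 with h | h | h
  · -- player 2 deviates down
    refine ⟨(s1 + s2) / 2, ⟨by linarith, by linarith⟩, Or.inr ?_⟩
    rw [u2, u2, u1_of_gt h, u1_of_gt (by linarith : s1 < (s1 + s2) / 2)]
    nlinarith
  · -- tie
    subst h
    rcases lt_or_eq_of_le h11 with hlt | heq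
    · -- s1 < 1 : deviate slightly up
      set δ : ℝ := (1 - s1) ^ 2 / (4 * (1 + P)) with hδ
      have hδpos : 0 < δ := div_pos (by nlinarith) (by linarith)
      have hδle : δ ≤ 1 - s1 := by
        rw [hδ, div_le_iff₀ (by linarith)]
        nlinarith
      refine ⟨s1 + δ, ⟨by linarith, by linarith⟩, Or.inl ?_⟩
      rw [u1_of_gt (by linarith : s1 < s1 + δ), u1_of_eq]
      have key : δ * (1 + P) = (1 - s1) ^ 2 / 4 := by
        rw [hδ]; field_simp
      nlinarith [sq_nonneg (1 - s1)]
    · -- s1 = 1 : deviate to 0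
      refine ⟨0, ⟨le_refl 0, zero_le_one⟩, Or.inl ?_⟩
      rw [u1_of_lt (by linarith : (0:ℝ) < s1), u1_of_eq]
      nlinarith
  · -- player 1 deviates down
    refine ⟨(s1 + s2) / 2, ⟨by linarith, by linarith⟩, Or.inl ?_⟩
    rw [u1_of_gt h, u1_of_gt (by linarith : s2 < (s1 + s2) / 2)]
    nlinarith
end

section
/- Let P > 0 and let u1 be the two-player CfR utility with reward R = 1. For 0 < ε ≤ 1/2, if both players play independently uniformly at random on [0, 2ε], the expected payoff of Player 1, namely (1/(4ε²))·∫_{[0,2ε]}∫_{[0,2ε]} u1(x,y) dx dy, equals ε(1−ε) − ε·P + (1−ε)²/2; in particular this expected payoff tends to 1/2 as ε → 0⁺. -/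
open MeasureTheory Filter

lemma poly_int (a b d e c : ℝ) :
    ∫ x in (0:ℝ)..c, (a + b*x + d*x^2 + e*x^3)
      = a*c + b*c^2/2 + d*c^3/3 + e*c^4/4 := by
  have h : ∀ x ∈ Set.uIcc (0:ℝ) c,
      HasDerivAt (fun x : ℝ => a*x + b*x^2/2 + d*x^3/3 + e*x^4/4)
        (a + b*x + d*x^2 + e*x^3) x := by
    intro x _
    have h1 : HasDerivAt (fun x : ℝ => a*x + b*x^2/2 + d*x^3/3 + e*x^4/4)
        (a*1 + b*(2*x^1)/2 + d*(3*x^2)/3 + e*(4*x^3)/4) x := by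
      exact ((((hasDerivAt_id x).const_mul a).add
        (((hasDerivAt_pow 2 x).const_mul b).div_const 2)).add
        (((hasDerivAt_pow 3 x).const_mul d).div_const 3)).add
        (((hasDerivAt_pow 4 x).const_mul e).div_const 4)
    convert h1 using 1
    ring
  rw [intervalIntegral.integral_eq_sub_of_hasDerivAt h
    ((Continuous.intervalIntegrable (by continuity) _ _))]
  ring

lemma inner_int (P c x : ℝ) (hx0 : 0 ≤ x) (hxc : x ≤ c) :
    ∫ y in (0:ℝ)..c, u1 P x y
      = c^2/2*(1-x) - x*P*c + (1-x)*(x - x^2/2) := by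
  have hae : ∀ᵐ y : ℝ, u1 P x y
      = y*(1-x) - x*P + Set.indicator {y : ℝ | y ≤ x} (fun y => (1-x)*(1-y)) y := by
    have h1 : ∀ᵐ (y : ℝ), y ≠ x := by
      rw [ae_iff]
      simp only [not_ne_iff, Set.setOf_eq_eq_singleton]
      exact measure_singleton x
    filter_upwards [h1] with y hy
    unfold u1 theta
    rcases lt_trichotomy y x with h | h | h
    · simp [Set.indicator, h, h.le, not_lt.2 h.le]
    · exact absurd h hy
    · simp [Set.indicator, h.ne, not_lt.2 h.le, (not_le.2 h)]
  have hcong : ∫ y in (0:ℝ)..c, u1 P x y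
      = ∫ y in (0:ℝ)..c,
          (y*(1-x) - x*P + Set.indicator {y : ℝ | y ≤ x} (fun y => (1-x)*(1-y)) y) := by
    apply intervalIntegral.integral_congr_ae
    filter_upwards [hae] with y hy _
    exact hy
  rw [hcong]
  have hint1 : IntervalIntegrable (fun y : ℝ => y*(1-x) - x*P) volume 0 c :=
    (Continuous.intervalIntegrable (by continuity) _ _)
  have hint2 : IntervalIntegrable
      (fun y : ℝ => Set.indicator {y : ℝ | y ≤ x} (fun y => (1-x)*(1-y)) y) volume 0 c := by
    rw [intervalIntegrable_iff]
    exact (((Continuous.integrableOn_uIoc (by continuity))).indicator measurableSet_Iic)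
  rw [intervalIntegral.integral_add hint1 hint2]
  have h2 : ∫ y in (0:ℝ)..c,
      Set.indicator {y : ℝ | y ≤ x} (fun y => (1-x)*(1-y)) y
      = ∫ y in (0:ℝ)..x, (1-x)*(1-y) :=
    intervalIntegral.integral_indicator ⟨hx0, hxc⟩
  rw [h2]
  have h3 : ∫ y in (0:ℝ)..c, (y*(1-x) - x*P) = c^2/2*(1-x) - x*P*c := by
    rw [show (fun y : ℝ => y*(1-x) - x*P) = (fun y : ℝ => -(x*P) + (1-x)*y + 0*y^2 + 0*y^3)
      from funext fun y => by ring, poly_int]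
    ring
  have h4 : ∫ y in (0:ℝ)..x, (1-x)*(1-y) = (1-x)*(x - x^2/2) := by
    rw [show (fun y : ℝ => (1-x)*(1-y)) = (fun y : ℝ => (1-x)*1 + (-(1-x))*y + 0*y^2 + 0*y^3)
      from funext fun y => by ring, poly_int]
    ring
  rw [h3, h4]

theorem stmt2 (P : ℝ) (hP : 0 < P) :
    (∀ ε : ℝ, 0 < ε → ε ≤ 1 / 2 →
      (1 / (4 * ε ^ 2)) * ∫ x in (0 : ℝ)..(2 * ε), ∫ y in (0 : ℝ)..(2 * ε), u1 P x y
        = ε * (1 - ε) - ε * P + (1 - ε) ^ 2 / 2) ∧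
    Tendsto (fun ε : ℝ => ε * (1 - ε) - ε * P + (1 - ε) ^ 2 / 2)
      (nhdsWithin 0 (Set.Ioi 0)) (nhds (1 / 2)) := by
  constructor
  · intro ε hε hε2
    set c : ℝ := 2 * ε with hc
    have hc0 : 0 ≤ c := by positivity
    have houter : ∫ x in (0:ℝ)..c, ∫ y in (0:ℝ)..c, u1 P x y
        = ∫ x in (0:ℝ)..c, (c^2/2*(1-x) - x*P*c + (1-x)*(x - x^2/2)) := by
      apply intervalIntegral.integral_congr
      intro x hx
      rw [Set.uIcc_of_le hc0] at hx
      exact inner_int P c x hx.1 hx.2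
    rw [houter]
    have hpoly : ∫ x in (0:ℝ)..c, (c^2/2*(1-x) - x*P*c + (1-x)*(x - x^2/2))
        = (c^2/2)*c + (1 - c^2/2 - P*c)*c^2/2 + (-(3/2))*c^3/3 + (1/2)*c^4/4 := by
      rw [show (fun x : ℝ => c^2/2*(1-x) - x*P*c + (1-x)*(x - x^2/2))
          = (fun x : ℝ => (c^2/2) + (1 - c^2/2 - P*c)*x + (-(3/2))*x^2 + (1/2)*x^3)
        from funext fun x => by ring]
      exact poly_int _ _ _ _ c
    rw [hpoly, hc]
    have hε' : ε ≠ 0 := ne_of_gt hε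
    field_simp
    ring
  · have hcont : Continuous (fun ε : ℝ => ε * (1 - ε) - ε * P + (1 - ε) ^ 2 / 2) := by
      continuity
    have := Tendsto.mono_left (hcont.tendsto 0)
      (nhdsWithin_le_nhds (s := Set.Ioi (0:ℝ)))
    simpa using this
end

section
/- Let P ≥ 0, k = sqrt((P+1)² + 1), h = 1 − sqrt((k−1)/(k+1)), and define f : [0,1] → ℝ by f(x) = (k−1)/(1−x)³ for 0 ≤ x < h and f(x) = 0 for h ≤ x ≤ 1. Then f is a probability density: ∫_0^1 f(x) dx = 1, and its mean is ∫_0^1 x·f(x) dx = k − (P+1). -/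
/-! With `u = 1 - h`, the antiderivatives `1 / (2 (1 - x)²)` of `1 / (1 - x)³` and
`1 / (2 (1 - x)²) - 1 / (1 - x)` of `x / (1 - x)³` reduce both integrals to the values
`(k - 1) / u² = k + 1` and `(k - 1) / u = √(k² - 1) = P + 1`. -/

open MeasureTheory Set

theorem intervalIntegral_eq_of_eqOn_ite {a b h : ℝ} {f g : ℝ → ℝ} (hah : a ≤ h) (hhb : h ≤ b)
    (hg : IntervalIntegrable g volume a h)
    (hf : ∀ x ∈ Icc a b, f x = if x < h then g x else 0) :
    ∫ x in a..b, f x = ∫ x in a..h, g x := by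
  have hfg : ∀ᵐ x, x ∈ uIoc a h → f x = g x := by
    filter_upwards [Measure.ae_ne volume h] with x hxh hx
    rw [uIoc_of_le hah] at hx
    rw [hf x ⟨hx.1.le, hx.2.trans hhb⟩, if_pos (hx.2.lt_of_ne hxh)]
  have hf0 : EqOn f 0 (uIcc h b) := by
    intro x hx
    rw [uIcc_of_le hhb] at hx
    rw [hf x ⟨hah.trans hx.1, hx.2⟩, if_neg (not_lt.mpr hx.1), Pi.zero_apply]
  have hf_left : IntervalIntegrable f volume a h :=
    hg.congr_ae <| (ae_restrict_iff' measurableSet_uIoc).mpr <|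
      hfg.mono fun x hx hmem => (hx hmem).symm
  have hf_right : IntervalIntegrable f volume h b :=
    (intervalIntegrable_const (c := (0 : ℝ))).congr fun x hx => (hf0 (uIoc_subset_uIcc hx)).symm
  rw [← intervalIntegral.integral_add_adjacent_intervals hf_left hf_right,
    intervalIntegral.integral_congr_ae hfg, intervalIntegral.integral_congr hf0]
  simp

section OneSubCube

variable {a b : ℝ}

theorem hasDerivAt_inv_two_mul_one_sub_sq {x : ℝ} (hx : 1 - x ≠ 0) :
    HasDerivAt (fun y => 1 / (2 * (1 - y) ^ 2)) (1 / (1 - x) ^ 3) x := by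
  have h := (hasDerivAt_const x (1 : ℝ)).div
    ((((hasDerivAt_id' x).const_sub 1).fun_pow 2).const_mul 2) (by positivity)
  exact h.congr_deriv (by field_simp; ring)

theorem hasDerivAt_inv_one_sub {x : ℝ} (hx : 1 - x ≠ 0) :
    HasDerivAt (fun y => 1 / (1 - y)) (1 / (1 - x) ^ 2) x := by
  have h := (hasDerivAt_const x (1 : ℝ)).div ((hasDerivAt_id' x).const_sub 1) hx
  exact h.congr_deriv (by field_simp; ring)

theorem one_sub_ne_zero_of_mem_uIcc (ha : a < 1) (hb : b < 1) {x : ℝ} (hx : x ∈ uIcc a b) :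
    1 - x ≠ 0 :=
  sub_ne_zero.mpr (hx.2.trans_lt (max_lt ha hb)).ne'

theorem continuousOn_div_one_sub_pow_three (c : ℝ) (ha : a < 1) (hb : b < 1) :
    ContinuousOn (fun x => c / (1 - x) ^ 3) (uIcc a b) :=
  continuousOn_const.div (by fun_prop) fun _ hx =>
    pow_ne_zero 3 (one_sub_ne_zero_of_mem_uIcc ha hb hx)

theorem integral_const_div_one_sub_pow_three (c : ℝ) (ha : a < 1) (hb : b < 1) :
    ∫ x in a..b, c / (1 - x) ^ 3 = c * (1 / (2 * (1 - b) ^ 2) - 1 / (2 * (1 - a) ^ 2)) := by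
  rw [mul_sub]
  refine intervalIntegral.integral_eq_sub_of_hasDerivAt (f := fun y => c * (1 / (2 * (1 - y) ^ 2)))
    (fun x hx => ?_) (continuousOn_div_one_sub_pow_three c ha hb).intervalIntegrable
  have hx' := one_sub_ne_zero_of_mem_uIcc ha hb hx
  exact ((hasDerivAt_inv_two_mul_one_sub_sq hx').const_mul c).congr_deriv (by field_simp)

theorem integral_mul_const_div_one_sub_pow_three (c : ℝ) (ha : a < 1) (hb : b < 1) :
    ∫ x in a..b, x * (c / (1 - x) ^ 3) =
      c * ((1 / (2 * (1 - b) ^ 2) - 1 / (1 - b)) - (1 / (2 * (1 - a) ^ 2) - 1 / (1 - a))) := by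
  rw [mul_sub]
  refine intervalIntegral.integral_eq_sub_of_hasDerivAt
    (f := fun y => c * (1 / (2 * (1 - y) ^ 2) - 1 / (1 - y))) (fun x hx => ?_)
    ((continuousOn_id' _).fun_mul (continuousOn_div_one_sub_pow_three c ha hb)).intervalIntegrable
  have hx' := one_sub_ne_zero_of_mem_uIcc ha hb hx
  -- `1 / (1 - x)³ - 1 / (1 - x)² = x / (1 - x)³`
  exact (((hasDerivAt_inv_two_mul_one_sub_sq hx').sub (hasDerivAt_inv_one_sub hx')).const_mul
    c).congr_deriv (by field_simp; ring)

end OneSubCube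

section Cutoff

variable {k : ℝ}

theorem sqrt_sub_one_div_add_one_pos (hk : 1 < k) : 0 < √((k - 1) / (k + 1)) :=
  Real.sqrt_pos.mpr (div_pos (by linarith) (by linarith))

theorem sqrt_sub_one_div_add_one_lt_one (hk : 1 < k) : √((k - 1) / (k + 1)) < 1 :=
  (Real.sqrt_lt' one_pos).mpr <| by rw [one_pow, div_lt_one (by linarith)]; linarith

theorem sub_one_eq_add_one_mul_sqrt_sq (hk : 1 < k) :
    k - 1 = (k + 1) * √((k - 1) / (k + 1)) ^ 2 := by
  rw [Real.sq_sqrt (div_nonneg (by linarith) (by linarith))]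
  field_simp

theorem sub_one_eq_sqrt_mul_sqrt (hk : 1 < k) :
    k - 1 = √(k ^ 2 - 1) * √((k - 1) / (k + 1)) := by
  have hk2 : 0 ≤ k ^ 2 - 1 := by nlinarith
  rw [← Real.sqrt_mul hk2, eq_comm, Real.sqrt_eq_iff_mul_self_eq
    (mul_nonneg hk2 (div_nonneg (by linarith) (by linarith))) (by linarith)]
  field_simp
  ring

end Cutoff

theorem stmt4 (P : ℝ) (hP : 0 ≤ P) (k h : ℝ)
    (hk : k = Real.sqrt ((P + 1) ^ 2 + 1))
    (hh : h = 1 - Real.sqrt ((k - 1) / (k + 1)))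
    (f : ℝ → ℝ)
    (hf : ∀ x ∈ Set.Icc (0 : ℝ) 1,
      f x = if x < h then (k - 1) / (1 - x) ^ 3 else 0) :
    (∫ x in (0 : ℝ)..1, f x) = 1 ∧
    (∫ x in (0 : ℝ)..1, x * f x) = k - (P + 1) := by
  have hk1 : 1 < k := by
    rw [hk, Real.lt_sqrt zero_le_one]
    nlinarith
  have hk_sq : k ^ 2 - 1 = (P + 1) ^ 2 := by
    rw [hk, Real.sq_sqrt (by positivity)]
    ring
  set u := √((k - 1) / (k + 1)) with hu
  have hu0 : 0 < u := sqrt_sub_one_div_add_one_pos hk1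
  have hh1 : h < 1 := by linarith [hh]
  have hh0 : 0 ≤ h := by linarith [hh, sqrt_sub_one_div_add_one_lt_one hk1]
  have hg := continuousOn_div_one_sub_pow_three (k - 1) one_pos hh1
  have hxf : ∀ x ∈ Icc (0 : ℝ) 1, x * f x = if x < h then x * ((k - 1) / (1 - x) ^ 3) else 0 :=
    fun x hx => by rw [hf x hx, mul_ite, mul_zero]
  rw [intervalIntegral_eq_of_eqOn_ite hh0 hh1.le hg.intervalIntegrable hf,
    intervalIntegral_eq_of_eqOn_ite hh0 hh1.le
      ((continuousOn_id' _).fun_mul hg).intervalIntegrable hxf,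
    integral_const_div_one_sub_pow_three _ one_pos hh1,
    integral_mul_const_div_one_sub_pow_three _ one_pos hh1, show 1 - h = u by linarith]
  have hsq := sub_one_eq_add_one_mul_sqrt_sq hk1
  have hlin := sub_one_eq_sqrt_mul_sqrt hk1
  rw [← hu] at hsq hlin
  rw [hk_sq, Real.sqrt_sq (by linarith)] at hlin
  constructor
  · field_simp
    linear_combination hsq
  · field_simp
    linear_combination hsq - 2 * u * hlin
end

section
/- Let n ≥ 2 be an integer, P ≥ 0, w > 0, and define f(x) = (P + w)/((n−1)·(1−x)^{2 + 1/(n−1)}·(P·x + w)^{1 − 1/(n−1)}) for x ∈ [0,1). Suppose r_max ∈ (0,1) satisfies ∫_0^{r_max} f(x) dx = 1 and ∫_0^{r_max} x·f(x) dx = w^{1/(n−1)}. Then for every x ∈ [0, r_max], −x·P + (1−x)·(∫_0^x f(y) dy + ∫_x^{r_max} y·f(y) dy)^{n−1} = w. That is, the n-player CfR utility of a player who plays the pure action x while all n−1 opponents draw their actions independently with density f is constant equal to w on [0, r_max], so the symmetric profile with density f is an equilibrium (indifference) profile. -/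
/-!
With `m = n - 1`, the bracket `∫₀ˣ f + ∫ₓ^{r_max} y f` equals `g x := ((P x + w) / (1 - x)) ^ (1 / m)` (`indifferenceLevel`)
on `[0, r_max]`. Indeed its derivative is `f x - x f x = (1 - x) f x`, which is exactly `g' x`, and at
`x = 0` it is the mean of `f`, namely `w ^ (1 / m) = g 0`. Hence `(1 - x) * g x ^ m = P x + w`, which is
the indifference identity.
-/

open MeasureTheory Set

/-- `m = n - 1` is the number of opponents. -/
noncomputable def cfrDensity (m P w x : ℝ) : ℝ :=
  (P + w) / (m * (1 - x) ^ (2 + 1 / m) * (P * x + w) ^ (1 - 1 / m))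

noncomputable def indifferenceLevel (m P w x : ℝ) : ℝ :=
  ((P * x + w) / (1 - x)) ^ (1 / m)

section

variable {m P w x : ℝ}

theorem continuousOn_cfrDensity :
    ContinuousOn (cfrDensity m P w) {x | 0 < P * x + w ∧ x < 1} := by
  rintro x ⟨hA, hB⟩
  have hB : 0 < 1 - x := by linarith
  apply ContinuousAt.continuousWithinAt
  have hpow₁ : ContinuousAt (fun y : ℝ => (1 - y) ^ (2 + 1 / m)) x :=
    (continuousAt_const.sub continuousAt_id).rpow_const (Or.inl hB.ne')
  have hpow₂ : ContinuousAt (fun y : ℝ => (P * y + w) ^ (1 - 1 / m)) x :=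
    ((continuousAt_const.mul continuousAt_id).add continuousAt_const).rpow_const (Or.inl hA.ne')
  by_cases hm : m = 0
  · have hzero : cfrDensity 0 P w = fun _ => 0 := by
      funext y
      simp [cfrDensity]
    rw [hm, hzero]
    exact continuousAt_const
  · refine continuousAt_const.div ((continuousAt_const.mul hpow₁).mul hpow₂) ?_
    have := Real.rpow_pos_of_pos hB (2 + 1 / m)
    have := Real.rpow_pos_of_pos hA (1 - 1 / m)
    positivity

theorem hasDerivAt_indifferenceLevel (hm : m ≠ 0) (hA : 0 < P * x + w) (hx : x < 1) :
    HasDerivAt (indifferenceLevel m P w) ((1 - x) * cfrDensity m P w x) x := by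
  have hB : 0 < 1 - x := by linarith
  have hratio : HasDerivAt (fun y => (P * y + w) / (1 - y)) ((P + w) / (1 - x) ^ 2) x := by
    have hnum : HasDerivAt (fun y : ℝ => P * y + w) P x := by
      simpa using ((hasDerivAt_id x).const_mul P).add_const w
    have hden : HasDerivAt (fun y : ℝ => 1 - y) (-1) x := by
      simpa using (hasDerivAt_id x).const_sub 1
    exact (hnum.div hden hB.ne').congr_deriv (by ring)
  refine ((Real.hasDerivAt_rpow_const (Or.inl (div_pos hA hB).ne')).comp x hratio).congr_deriv ?_
  have hcube : (1 - x) ^ (3 : ℕ) = (1 - x) ^ (2 + 1 / m) * (1 - x) ^ (1 - 1 / m) := by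
    rw [← Real.rpow_add hB, ← Real.rpow_natCast]
    norm_num
  have hexp : ((P * x + w) / (1 - x)) ^ (1 / m - 1)
      = (1 - x) ^ (1 - 1 / m) / (P * x + w) ^ (1 - 1 / m) := by
    rw [Real.div_rpow hA.le hB.le, show 1 / m - 1 = -(1 - 1 / m) by ring,
      Real.rpow_neg hA.le, Real.rpow_neg hB.le]
    field_simp
  have h₁ := Real.rpow_pos_of_pos hB (2 + 1 / m)
  have h₂ := Real.rpow_pos_of_pos hB (1 - 1 / m)
  have h₃ := Real.rpow_pos_of_pos hA (1 - 1 / m)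
  rw [cfrDensity, hexp]
  generalize (1 - x) ^ (2 + 1 / m) = a at *
  generalize (1 - x) ^ (1 - 1 / m) = b at *
  generalize (P * x + w) ^ (1 - 1 / m) = c at *
  field_simp
  linear_combination -(P + w) * hcube

theorem one_sub_mul_indifferenceLevel_pow {k : ℕ} (hk : k ≠ 0) (hA : 0 < P * x + w)
    (hx : x < 1) : (1 - x) * indifferenceLevel k P w x ^ k = P * x + w := by
  have hB : 0 < 1 - x := by linarith
  rw [indifferenceLevel, ← Real.rpow_natCast, ← Real.rpow_mul (div_pos hA hB).le,
    one_div_mul_cancel (Nat.cast_ne_zero.mpr hk), Real.rpow_one]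
  field_simp

end

theorem integral_add_integral_mul_eq_of_hasDerivAt {f G : ℝ → ℝ} {a r : ℝ}
    (hG : ∀ y ∈ Icc a r, HasDerivAt G ((1 - y) * f y) y) (hf : ContinuousOn f (Icc a r))
    (hmean : ∫ y in a..r, y * f y = G a) {x : ℝ} (hx : x ∈ Icc a r) :
    (∫ y in a..x, f y) + ∫ y in x..r, y * f y = G x := by
  have hsub : uIcc a x ⊆ Icc a r := by
    rw [uIcc_of_le hx.1]
    exact Icc_subset_Icc le_rfl hx.2
  have hsub' : uIcc x r ⊆ Icc a r := by
    rw [uIcc_of_le hx.2]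
    exact Icc_subset_Icc hx.1 le_rfl
  have hf_int : IntervalIntegrable f volume a x := (hf.mono hsub).intervalIntegrable
  have hmul : ContinuousOn (fun y => y * f y) (Icc a r) := continuousOn_id.mul hf
  have hmul_int : IntervalIntegrable (fun y => y * f y) volume a x :=
    (hmul.mono hsub).intervalIntegrable
  have hsplit := intervalIntegral.integral_add_adjacent_intervals hmul_int
    (hmul.mono hsub').intervalIntegrable
  have hftc : ∫ y in a..x, (1 - y) * f y = G x - G a :=
    intervalIntegral.integral_eq_sub_of_hasDerivAt (fun y hy => hG y (hsub hy))
      (((continuousOn_const.sub continuousOn_id).mul hf).mono hsub).intervalIntegrable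
  have hdiff : ∫ y in a..x, (1 - y) * f y = (∫ y in a..x, f y) - ∫ y in a..x, y * f y := by
    rw [← intervalIntegral.integral_sub hf_int hmul_int]
    congr 1
    ext y
    ring
  linarith

theorem stmt9_general (n : ℕ) (hn : 2 ≤ n) (P w : ℝ) (hP : 0 ≤ P) (hw : 0 < w)
    (f : ℝ → ℝ)
    (hf : ∀ x ∈ Set.Ico (0 : ℝ) 1,
      f x = (P + w) /
        (((n : ℝ) - 1) * (1 - x) ^ (2 + 1 / ((n : ℝ) - 1)) *
          (P * x + w) ^ (1 - 1 / ((n : ℝ) - 1))))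
    (rmax : ℝ) (hrmax : rmax ∈ Set.Ioo (0 : ℝ) 1)
    (hmean : (∫ x in (0 : ℝ)..rmax, x * f x) = w ^ (1 / ((n : ℝ) - 1))) :
    ∀ x ∈ Set.Icc (0 : ℝ) rmax,
      -x * P + (1 - x) *
        ((∫ y in (0 : ℝ)..x, f y) + ∫ y in x..rmax, y * f y) ^ (n - 1) = w := by
  obtain ⟨k, rfl⟩ : ∃ k, n = k + 1 := ⟨n - 1, by omega⟩
  have hk : k ≠ 0 := by omega
  have hcast : ((k + 1 : ℕ) : ℝ) - 1 = k := by push_cast; ring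
  rw [hcast] at hf hmean
  rw [Nat.add_sub_cancel]
  have hdom : ∀ y ∈ Icc 0 rmax, 0 < P * y + w ∧ y < 1 := fun y hy =>
    ⟨by nlinarith [hy.1], hy.2.trans_lt hrmax.2⟩
  have hfeq : EqOn (cfrDensity k P w) f (Icc 0 rmax) := fun y hy =>
    (hf y ⟨hy.1, (hdom y hy).2⟩).symm
  have hf_cont : ContinuousOn f (Icc 0 rmax) :=
    (continuousOn_cfrDensity.mono hdom).congr hfeq.symm
  have hG : ∀ y ∈ Icc 0 rmax, HasDerivAt (indifferenceLevel k P w) ((1 - y) * f y) y :=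
    fun y hy => hfeq hy ▸ hasDerivAt_indifferenceLevel (Nat.cast_ne_zero.mpr hk) (hdom y hy).1
      (hdom y hy).2
  have hG0 : indifferenceLevel k P w 0 = w ^ (1 / (k : ℝ)) := by simp [indifferenceLevel]
  intro x hx
  rw [integral_add_integral_mul_eq_of_hasDerivAt hG hf_cont (hmean.trans hG0.symm) hx,
    one_sub_mul_indifferenceLevel_pow hk (hdom x hx).1 (hdom x hx).2]
  ring

theorem stmt9 (n : ℕ) (hn : 2 ≤ n) (P w : ℝ) (hP : 0 ≤ P) (hw : 0 < w)
    (f : ℝ → ℝ)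
    (hf : ∀ x ∈ Set.Ico (0 : ℝ) 1,
      f x = (P + w) /
        (((n : ℝ) - 1) * (1 - x) ^ (2 + 1 / ((n : ℝ) - 1)) *
          (P * x + w) ^ (1 - 1 / ((n : ℝ) - 1))))
    (rmax : ℝ) (hrmax : rmax ∈ Set.Ioo (0 : ℝ) 1)
    (hnorm : (∫ x in (0 : ℝ)..rmax, f x) = 1)
    (hmean : (∫ x in (0 : ℝ)..rmax, x * f x) = w ^ (1 / ((n : ℝ) - 1))) :
    ∀ x ∈ Set.Icc (0 : ℝ) rmax,
      -x * P + (1 - x) *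
        ((∫ y in (0 : ℝ)..x, f y) + ∫ y in x..rmax, y * f y) ^ (n - 1) = w :=
  stmt9_general n hn P w hP hw f hf rmax hrmax hmean
end

section
/- Let n ≥ 2 be an integer, P ≥ 0, w > 0, and f(x) = (P+w)/((n−1)·(1−x)^{2 + 1/(n−1)}·(P·x + w)^{1 − 1/(n−1)}). Then for every x ∈ [0,1): (i) the derivative at x of the function F(t) = ((w + n·P·(1−t) + P·t)/(n·(1−t)·(P+w)))·((P·t + w)/(1−t))^{1/(n−1)} equals f(x); and (ii) the derivative at x of the function G(t) = ((w − n·w·(1−t) + P·t)/(n·(1−t)·(P+w)))·((P·t + w)/(1−t))^{1/(n−1)} equals x·f(x). Hence F and G are antiderivatives of f and of x ↦ x·f(x) respectively on [0,1). -/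
/-!
Both `F` and `G` have the shape `t ↦ (b t + a)/(1 - t) · B(t)^c / (n (P + w))` with
`B(t) = (P t + w)/(1 - t)`, `c = 1/(n - 1)` and `B' = (P + w)/(1 - t)²`. Differentiating gives
`B^c / ((1 - t)² (P t + w))` times `(a + b)(P t + w) + c (b t + a)(P + w)`, and for the coefficients
of `F` resp. `G` this factor is `n (P + w)² / (n - 1)` times `1` resp. `t`. Since
`(1 - x)^(2 + c) (P x + w)^(1 - c) = (1 - x)² (P x + w) / B(x)^c`, that is `f` resp. `x f`.
-/

open Real

theorem hasDerivAt_affine_div_one_sub {p q x : ℝ} (hx : x ≠ 1) :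
    HasDerivAt (fun t => (p * t + q) / (1 - t)) ((p + q) / (1 - x) ^ 2) x := by
  have hx' : 1 - x ≠ 0 := sub_ne_zero.mpr hx.symm
  have hnum : HasDerivAt (fun t : ℝ => p * t + q) p x := by
    simpa using ((hasDerivAt_id x).const_mul p).add_const q
  have hden : HasDerivAt (fun t : ℝ => 1 - t) (-1) x := by
    simpa using (hasDerivAt_id x).const_sub 1
  refine (hnum.div hden hx').congr_deriv ?_
  ring

theorem hasDerivAt_affine_div_one_sub_mul_rpow {a b p q c x : ℝ} (hx : x ≠ 1)
    (hq : p * x + q ≠ 0) :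
    HasDerivAt (fun t => (b * t + a) / (1 - t) * ((p * t + q) / (1 - t)) ^ c)
      (((a + b) * (p * x + q) + c * (b * x + a) * (p + q)) / ((1 - x) ^ 2 * (p * x + q)) *
        ((p * x + q) / (1 - x)) ^ c) x := by
  have hx' : 1 - x ≠ 0 := sub_ne_zero.mpr hx.symm
  have hB : (p * x + q) / (1 - x) ≠ 0 := div_ne_zero hq hx'
  refine ((hasDerivAt_affine_div_one_sub hx).mul
    ((hasDerivAt_affine_div_one_sub hx).rpow_const (p := c) (Or.inl hB))).congr_deriv ?_
  rw [rpow_sub_one hB]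
  generalize ((p * x + q) / (1 - x)) ^ c = y
  rw [mul_comm p x] at hq ⊢
  field_simp
  ring

theorem rpow_two_add_mul_rpow_one_sub {u v : ℝ} (hu : 0 < u) (hv : 0 < v) (c : ℝ) :
    u ^ (2 + c) * v ^ (1 - c) = u ^ 2 * v / (v / u) ^ c := by
  rw [rpow_add hu, rpow_sub hv, rpow_one, div_rpow hv.le hu.le, rpow_two]
  have := rpow_pos_of_pos hu c
  have := rpow_pos_of_pos hv c
  field_simp

theorem hasDerivAt_affine_div_one_sub_mul_rpow_div {m P w x : ℝ} (hm : m ≠ 0) (hm1 : m - 1 ≠ 0)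
    (hPw : P + w ≠ 0) (hx : x ≠ 1) (hPx : P * x + w ≠ 0) (a b k : ℝ)
    (hab : (a + b) * (m - 1) * (P * x + w) + (b * x + a) * (P + w) = k * m * (P + w) ^ 2) :
    HasDerivAt (fun t => (b * t + a) / (1 - t) * ((P * t + w) / (1 - t)) ^ (1 / (m - 1)) /
        (m * (P + w)))
      (k * ((P + w) / ((m - 1) * (1 - x) ^ 2 * (P * x + w)) *
        ((P * x + w) / (1 - x)) ^ (1 / (m - 1)))) x := by
  refine ((hasDerivAt_affine_div_one_sub_mul_rpow (a := a) (b := b) (c := 1 / (m - 1))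
    hx hPx).div_const (m * (P + w))).congr_deriv ?_
  generalize ((P * x + w) / (1 - x)) ^ (1 / (m - 1)) = y
  field_simp
  linear_combination y * hab

theorem stmt10 (n : ℕ) (hn : 2 ≤ n) (P w : ℝ) (hP : 0 ≤ P) (hw : 0 < w)
    (f F G : ℝ → ℝ)
    (hf : ∀ x ∈ Set.Ico (0 : ℝ) 1,
      f x = (P + w) /
        (((n : ℝ) - 1) * (1 - x) ^ (2 + 1 / ((n : ℝ) - 1)) *
          (P * x + w) ^ (1 - 1 / ((n : ℝ) - 1))))
    (hF : ∀ t, F t = ((w + (n : ℝ) * P * (1 - t) + P * t) / ((n : ℝ) * (1 - t) * (P + w))) *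
      ((P * t + w) / (1 - t)) ^ (1 / ((n : ℝ) - 1)))
    (hG : ∀ t, G t = ((w - (n : ℝ) * w * (1 - t) + P * t) / ((n : ℝ) * (1 - t) * (P + w))) *
      ((P * t + w) / (1 - t)) ^ (1 / ((n : ℝ) - 1))) :
    ∀ x ∈ Set.Ico (0 : ℝ) 1,
      HasDerivAt F (f x) x ∧ HasDerivAt G (x * f x) x := by
  rintro x ⟨hx0, hx1⟩
  have hn1 : (1 : ℝ) < n := by exact_mod_cast hn
  have hPx : 0 < P * x + w := by positivity
  have hfx : f x = (P + w) / (((n : ℝ) - 1) * (1 - x) ^ 2 * (P * x + w)) *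
      ((P * x + w) / (1 - x)) ^ (1 / ((n : ℝ) - 1)) := by
    rw [hf x ⟨hx0, hx1⟩, mul_assoc _ ((1 - x) ^ _),
      rpow_two_add_mul_rpow_one_sub (sub_pos.mpr hx1) hPx]
    field_simp
  have hderiv := hasDerivAt_affine_div_one_sub_mul_rpow_div (m := n) (by positivity) (by linarith)
    (by positivity) hx1.ne hPx.ne'
  rw [hfx]
  constructor
  · refine ((hderiv (w + n * P) (P - n * P) 1 (by ring)).congr_deriv
      (one_mul _)).congr_of_eventuallyEq (.of_forall fun t => ?_)
    rw [hF, mul_right_comm (n : ℝ) (1 - t), ← div_div]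
    ring
  · refine (hderiv (w - n * w) (P + n * w) x (by ring)).congr_of_eventuallyEq
      (.of_forall fun t => ?_)
    rw [hG, mul_right_comm (n : ℝ) (1 - t), ← div_div]
    ring
end

section
/- Let P > 0, c ∈ ℝ, and let g : [0,1] → ℝ be a continuous nonnegative probability density on [0,1] with mean b̄ = ∫_0^1 y·g(y) dy. Suppose I ⊆ [0,1) is a nonempty open interval such that for all a ∈ I, b̄·(1−a) − a·P + (1−a)·∫_0^a (1−b)·g(b) db = c. Then g(a) = (c + P)/(1−a)³ for every a ∈ I. -/
open MeasureTheory

theorem stmt11 (P c : ℝ) (hP : 0 < P) (g : ℝ → ℝ)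
    (hgcont : ContinuousOn g (Set.Icc 0 1))
    (hgnonneg : ∀ x ∈ Set.Icc (0 : ℝ) 1, 0 ≤ g x)
    (hgnorm : (∫ x in (0 : ℝ)..1, g x) = 1)
    (bbar : ℝ) (hbbar : bbar = ∫ y in (0 : ℝ)..1, y * g y)
    (lo hi : ℝ) (hlo : 0 ≤ lo) (hlohi : lo < hi) (hhi : hi ≤ 1)
    (hind : ∀ a ∈ Set.Ioo lo hi,
      bbar * (1 - a) - a * P + (1 - a) * ∫ b in (0 : ℝ)..a, (1 - b) * g b = c) :
    ∀ a ∈ Set.Ioo lo hi, g a = (c + P) / (1 - a) ^ 3 := by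
  intro a ha
  obtain ⟨hal, hah⟩ := ha
  have ha0 : 0 < a := lt_of_le_of_lt hlo hal
  have ha1 : a < 1 := lt_of_lt_of_le hah hhi
  have hu : (0:ℝ) < 1 - a := by linarith
  set f : ℝ → ℝ := fun b => (1 - b) * g b with hf
  have hfcont : ContinuousOn f (Set.Icc 0 1) :=
    (continuousOn_const.sub continuousOn_id).mul hgcont
  have hmem : Set.Icc (0:ℝ) 1 ∈ nhds a := Icc_mem_nhds ha0 ha1
  have hfa : ContinuousAt f a := hfcont.continuousAt hmem
  have hint : IntervalIntegrable f volume 0 a := by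
    apply (hfcont.mono ?_).intervalIntegrable
    rw [Set.uIcc_of_le ha0.le]
    exact Set.Icc_subset_Icc le_rfl ha1.le
  have hH : HasDerivAt (fun u => ∫ b in (0:ℝ)..u, f b) (f a) a :=
    intervalIntegral.integral_hasDerivAt_right hint
      ⟨Set.Icc 0 1, hmem, hfcont.aestronglyMeasurable measurableSet_Icc⟩ hfa
  set H : ℝ := ∫ b in (0:ℝ)..a, f b with hHdef
  have h1 : HasDerivAt (fun x : ℝ => bbar * (1 - x)) (bbar * (-1)) a :=
    ((hasDerivAt_id a).const_sub 1).const_mul bbar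
  have h2 : HasDerivAt (fun x : ℝ => x * P) P a := by
    simpa using (hasDerivAt_id a).mul_const P
  have h3 : HasDerivAt (fun x : ℝ => (1 - x) * ∫ b in (0:ℝ)..x, f b)
      ((-1) * H + (1 - a) * f a) a :=
    ((hasDerivAt_id a).const_sub 1).mul hH
  have hF : HasDerivAt (fun x : ℝ => bbar * (1 - x) - x * P + (1 - x) * ∫ b in (0:ℝ)..x, f b)
      (bbar * (-1) - P + ((-1) * H + (1 - a) * f a)) a := (h1.sub h2).add h3
  have hEq : (fun x : ℝ => bbar * (1 - x) - x * P + (1 - x) * ∫ b in (0:ℝ)..x, f b)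
      =ᶠ[nhds a] fun _ => c := by
    filter_upwards [(isOpen_Ioo : IsOpen (Set.Ioo lo hi)).mem_nhds ⟨hal, hah⟩] with x hx
    exact hind x hx
  have hD0 : bbar * (-1) - P + ((-1) * H + (1 - a) * f a) = 0 := by
    have := (hF.congr_of_eventuallyEq hEq.symm).unique (hasDerivAt_const a c)
    simpa using this
  have eqc : bbar * (1 - a) - a * P + (1 - a) * H = c := hind a ⟨hal, hah⟩
  have hfa' : f a = (1 - a) * g a := rfl
  rw [hfa'] at hD0
  have hne : (1 - a) ≠ 0 := ne_of_gt hu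
  field_simp
  nlinarith [hD0, eqc, sq_nonneg (1 - a)]
end

section
/- Fix P > 0. For each integer n ≥ 2 let r_n ∈ (0,1) and w_n ∈ (0,1), write r̄_n = w_n^{1/(n−1)}, and suppose they satisfy the two equations: (E1) ((w_n + n·P·(1−r_n) + P·r_n)/(n·(1−r_n)·(P+w_n)))·((P·r_n + w_n)/(1−r_n))^{1/(n−1)} − ((w_n + n·P)/(n·(P+w_n)))·w_n^{1/(n−1)} = 1, and (E2) ((w_n − n·w_n·(1−r_n) + P·r_n)/(n·(1−r_n)·(P+w_n)))·((P·r_n + w_n)/(1−r_n))^{1/(n−1)} − ((w_n − n·w_n)/(n·(P+w_n)))·w_n^{1/(n−1)} = w_n^{1/(n−1)}. Assume additionally that there is δ > 0 with δ ≤ r_n ≤ 1−δ for all n, and that r̄_n → 0 as n → ∞. Then r_n → 1/(1+P) and n·P·r̄_n → 1 as n → ∞; i.e., the equilibrium cutoff tends to 1/(1+P) and the average risk satisfies r̄_n ∼ 1/(nP). -/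
/-!
Subtracting (E2) from (E1), the coefficients of both root terms differ by exactly one, which
leaves `((P r + w)/(1 - r))^(1/(n-1)) = 1`, i.e. the cutoff relation `P r + w = 1 - r`.
Feeding this back into (E1) gives the exact identity `n P r̄ = 1 - n w - w r̄`. Since
`w = r̄^(n-1)` with `r̄ → 0`, the product `n w` decays geometrically, so `r = (1 - w)/(1 + P)`
tends to `1/(1 + P)` and `n P r̄` tends to `1`.
-/

open Filter Topology

lemma rpow_one_div_natCast_sub_one_pow {x : ℝ} (hx : 0 ≤ x) {n : ℕ} (hn : 2 ≤ n) :
    (x ^ (1 / ((n : ℝ) - 1))) ^ (n - 1) = x := by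
  rw [← Nat.cast_pred (by omega), one_div]
  exact Real.rpow_inv_natCast_pow hx (by omega)

lemma tendsto_natCast_mul_pow_pred_of_tendsto_zero {a : ℕ → ℝ} (ha : Tendsto a atTop (𝓝 0)) :
    Tendsto (fun n : ℕ => (n : ℝ) * a n ^ (n - 1)) atTop (𝓝 0) := by
  have hgeom : Tendsto (fun n : ℕ => 2 * ((n : ℝ) * (1 / 2 : ℝ) ^ n)) atTop (𝓝 0) := by
    simpa using (tendsto_self_mul_const_pow_of_lt_one (r := 1 / 2) (by norm_num) (by norm_num)).const_mul 2
  have hsmall : ∀ᶠ n in atTop, ‖a n‖ ≤ 1 / 2 :=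
    (tendsto_zero_iff_norm_tendsto_zero.mp ha).eventually (eventually_le_nhds (by norm_num))
  refine squeeze_zero_norm' ?_ hgeom
  filter_upwards [eventually_ge_atTop 1, hsmall] with n hn han
  calc ‖(n : ℝ) * a n ^ (n - 1)‖ = n * ‖a n‖ ^ (n - 1) := by simp
    _ ≤ n * (1 / 2) ^ (n - 1) := by gcongr
    _ = 2 * (n * (1 / 2) ^ n) := by
      obtain ⟨k, rfl⟩ := Nat.exists_eq_add_of_le' hn
      simp only [Nat.add_sub_cancel, pow_succ]
      ring

section ClosedForm

variable {P r w n A B : ℝ}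

lemma cutoff_root_eq_one (hn : n ≠ 0) (hr : 1 - r ≠ 0) (hPw : P + w ≠ 0)
    (e1 : (w + n * P * (1 - r) + P * r) / (n * (1 - r) * (P + w)) * A -
      (w + n * P) / (n * (P + w)) * B = 1)
    (e2 : (w - n * w * (1 - r) + P * r) / (n * (1 - r) * (P + w)) * A -
      (w - n * w) / (n * (P + w)) * B = B) :
    A = 1 := by
  have hcoeffA : (w + n * P * (1 - r) + P * r) / (n * (1 - r) * (P + w)) -
      (w - n * w * (1 - r) + P * r) / (n * (1 - r) * (P + w)) = 1 := by
    rw [div_sub_div_same, div_eq_one_iff_eq (by simp [*])]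
    ring
  have hcoeffB : (w + n * P) / (n * (P + w)) - (w - n * w) / (n * (P + w)) = 1 := by
    rw [div_sub_div_same, div_eq_one_iff_eq (by simp [*])]
    ring
  linear_combination e1 - e2 - A * hcoeffA + B * hcoeffB

lemma average_risk_identity (hn : n ≠ 0) (hr : 1 - r ≠ 0) (hPw : P + w ≠ 0)
    (hcutoff : P * r + w = 1 - r)
    (e1 : (w + n * P * (1 - r) + P * r) / (n * (1 - r) * (P + w)) -
      (w + n * P) / (n * (P + w)) * B = 1) :
    n * P * B = 1 - n * w - w * B := by
  have hnum : w + n * P * (1 - r) + P * r = (1 - r) * (1 + n * P) := by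
    linear_combination hcutoff
  rw [hnum] at e1
  field_simp at e1
  linear_combination -e1

end ClosedForm

lemma cutoff_relation_and_average_risk_identity {P r w : ℝ} (hP : 0 < P) {n : ℕ} (hn : 2 ≤ n)
    (hr : r ∈ Set.Ioo (0 : ℝ) 1) (hw : w ∈ Set.Ioo (0 : ℝ) 1)
    (hE1 : ((w + (n : ℝ) * P * (1 - r) + P * r) / ((n : ℝ) * (1 - r) * (P + w))) *
          ((P * r + w) / (1 - r)) ^ (1 / ((n : ℝ) - 1)) -
        ((w + (n : ℝ) * P) / ((n : ℝ) * (P + w))) * w ^ (1 / ((n : ℝ) - 1)) = 1)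
    (hE2 : ((w - (n : ℝ) * w * (1 - r) + P * r) / ((n : ℝ) * (1 - r) * (P + w))) *
          ((P * r + w) / (1 - r)) ^ (1 / ((n : ℝ) - 1)) -
        ((w - (n : ℝ) * w) / ((n : ℝ) * (P + w))) * w ^ (1 / ((n : ℝ) - 1))
        = w ^ (1 / ((n : ℝ) - 1))) :
    P * r + w = 1 - r ∧
      (n : ℝ) * P * w ^ (1 / ((n : ℝ) - 1)) = 1 - n * w - w * w ^ (1 / ((n : ℝ) - 1)) := by
  obtain ⟨hr0, hr1⟩ := hr
  obtain ⟨hw0, -⟩ := hw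
  have hn0 : (n : ℝ) ≠ 0 := by positivity
  have h1r : 1 - r ≠ 0 := by linarith
  have hPw : P + w ≠ 0 := by linarith
  have hroot := cutoff_root_eq_one hn0 h1r hPw hE1 hE2
  have hbase : (P * r + w) / (1 - r) = 1 := by
    rw [← rpow_one_div_natCast_sub_one_pow (x := (P * r + w) / (1 - r)) (by positivity) hn,
      hroot, one_pow]
  have hcutoff : P * r + w = 1 - r := (div_eq_one_iff_eq h1r).mp hbase
  rw [hroot, mul_one] at hE1
  exact ⟨hcutoff, average_risk_identity hn0 h1r hPw hcutoff hE1⟩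

theorem stmt12_general (P : ℝ) (hP : 0 < P) (r w rbar : ℕ → ℝ)
    (hr : ∀ n, 2 ≤ n → r n ∈ Set.Ioo (0 : ℝ) 1)
    (hw : ∀ n, 2 ≤ n → w n ∈ Set.Ioo (0 : ℝ) 1)
    (hrbar : ∀ n, 2 ≤ n → rbar n = w n ^ (1 / ((n : ℝ) - 1)))
    -- (E1): the normalization constraint ∫ f = 1 in closed form
    (hE1 : ∀ n, 2 ≤ n →
      ((w n + (n : ℝ) * P * (1 - r n) + P * r n) / ((n : ℝ) * (1 - r n) * (P + w n))) *
          ((P * r n + w n) / (1 - r n)) ^ (1 / ((n : ℝ) - 1)) -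
        ((w n + (n : ℝ) * P) / ((n : ℝ) * (P + w n))) * w n ^ (1 / ((n : ℝ) - 1)) = 1)
    -- (E2): the mean constraint ∫ x f(x) dx = r̄ in closed form
    (hE2 : ∀ n, 2 ≤ n →
      ((w n - (n : ℝ) * w n * (1 - r n) + P * r n) / ((n : ℝ) * (1 - r n) * (P + w n))) *
          ((P * r n + w n) / (1 - r n)) ^ (1 / ((n : ℝ) - 1)) -
        ((w n - (n : ℝ) * w n) / ((n : ℝ) * (P + w n))) * w n ^ (1 / ((n : ℝ) - 1))
        = w n ^ (1 / ((n : ℝ) - 1)))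
    (hrbar0 : Tendsto rbar atTop (nhds 0)) :
    Tendsto r atTop (nhds (1 / (1 + P))) ∧
    Tendsto (fun n : ℕ => (n : ℝ) * P * rbar n) atTop (nhds 1) := by
  have hid : ∀ n, 2 ≤ n → P * r n + w n = 1 - r n ∧
      (n : ℝ) * P * rbar n = 1 - n * w n - w n * rbar n := fun n hn => by
    rw [hrbar n hn]
    exact cutoff_relation_and_average_risk_identity hP hn (hr n hn) (hw n hn) (hE1 n hn) (hE2 n hn)
  have hnw : Tendsto (fun n : ℕ => (n : ℝ) * w n) atTop (𝓝 0) := by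
    refine (tendsto_natCast_mul_pow_pred_of_tendsto_zero hrbar0).congr' ?_
    filter_upwards [eventually_ge_atTop 2] with n hn
    rw [hrbar n hn, rpow_one_div_natCast_sub_one_pow (hw n hn).1.le hn]
  have hw0 : Tendsto w atTop (𝓝 0) := by
    refine squeeze_zero' ?_ ?_ hnw <;> filter_upwards [eventually_ge_atTop 2] with n hn
    · exact (hw n hn).1.le
    · exact le_mul_of_one_le_left (hw n hn).1.le (by exact_mod_cast (by omega : 1 ≤ n))
  constructor
  · have hlim : Tendsto (fun n => (1 - w n) / (1 + P)) atTop (𝓝 (1 / (1 + P))) := by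
      simpa using ((tendsto_const_nhds (x := (1 : ℝ))).sub hw0).div_const (1 + P)
    refine hlim.congr' ?_
    filter_upwards [eventually_ge_atTop 2] with n hn
    rw [div_eq_iff (by positivity)]
    linarith [(hid n hn).1]
  · have hlim : Tendsto (fun n => 1 - n * w n - w n * rbar n) atTop (𝓝 1) := by
      simpa using ((tendsto_const_nhds (x := (1 : ℝ))).sub hnw).sub (hw0.mul hrbar0)
    refine hlim.congr' ?_
    filter_upwards [eventually_ge_atTop 2] with n hn
    exact (hid n hn).2.symm

theorem stmt12 (P : ℝ) (hP : 0 < P) (r w rbar : ℕ → ℝ)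
    (hr : ∀ n, 2 ≤ n → r n ∈ Set.Ioo (0 : ℝ) 1)
    (hw : ∀ n, 2 ≤ n → w n ∈ Set.Ioo (0 : ℝ) 1)
    (hrbar : ∀ n, 2 ≤ n → rbar n = w n ^ (1 / ((n : ℝ) - 1)))
    -- (E1): the normalization constraint ∫ f = 1 in closed form
    (hE1 : ∀ n, 2 ≤ n →
      ((w n + (n : ℝ) * P * (1 - r n) + P * r n) / ((n : ℝ) * (1 - r n) * (P + w n))) *
          ((P * r n + w n) / (1 - r n)) ^ (1 / ((n : ℝ) - 1)) -
        ((w n + (n : ℝ) * P) / ((n : ℝ) * (P + w n))) * w n ^ (1 / ((n : ℝ) - 1)) = 1)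
    -- (E2): the mean constraint ∫ x f(x) dx = r̄ in closed form
    (hE2 : ∀ n, 2 ≤ n →
      ((w n - (n : ℝ) * w n * (1 - r n) + P * r n) / ((n : ℝ) * (1 - r n) * (P + w n))) *
          ((P * r n + w n) / (1 - r n)) ^ (1 / ((n : ℝ) - 1)) -
        ((w n - (n : ℝ) * w n) / ((n : ℝ) * (P + w n))) * w n ^ (1 / ((n : ℝ) - 1))
        = w n ^ (1 / ((n : ℝ) - 1)))
    (δ : ℝ) (hδ : 0 < δ) (hbound : ∀ n, 2 ≤ n → δ ≤ r n ∧ r n ≤ 1 - δ)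
    (hrbar0 : Tendsto rbar atTop (nhds 0)) :
    Tendsto r atTop (nhds (1 / (1 + P))) ∧
    Tendsto (fun n : ℕ => (n : ℝ) * P * rbar n) atTop (nhds 1) :=
  stmt12_general P hP r w rbar hr hw hrbar hE1 hE2 hrbar0
end

section
/- Let P ≥ 0, set r_max = 1 − exp(−1/(P+1)), and define p(x) = (1+P)/(1−x) for 0 ≤ x < r_max and p(x) = 0 for r_max ≤ x ≤ 1. Then: (i) ∫_0^1 p(x) dx = 1; (ii) ∫_0^1 x·p(x) dx = 1 − (P+1)·(1 − exp(−1/(P+1))); and (iii) for every a ∈ [0, r_max], ∫_0^1 p(b)·min(a,b) db + a·P = (1−a)·∫_0^a p(b) db, i.e., the equilibrium indifference condition of the CfR game with perfectly positively correlated risks (ρ = 1) holds on the support of p. -/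
/-!
On `[0, r_max)` the density is `(1 + P) / (1 - x)`, with antiderivative `-(1 + P) log (1 - x)`,
and `r_max` is chosen so that `log (1 - r_max) = -1 / (P + 1)`: this makes the total mass `1`.
The first moment and the indifference condition reduce to the same logarithmic integrals, after
writing `x / (1 - x) = 1 / (1 - x) - 1` and splitting `min a b` at `b = a`.
-/

open MeasureTheory Set intervalIntegral

theorem integral_ite_lt {f : ℝ → ℝ} {s u r : ℝ} (hsu : s ≤ u) (hsr : s ≤ r) :
    ∫ x in s..u, (if x < r then f x else 0) = ∫ x in s..min u r, f x := by
  rw [integral_of_le hsu, integral_of_le (le_min hsu hsr)]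
  calc ∫ x in Ioc s u, (if x < r then f x else 0)
      = ∫ x in Ioc s u, (Iio r).indicator f x := by simp only [indicator_apply, mem_Iio]
    _ = ∫ x in Ioc s u ∩ Iio r, f x := setIntegral_indicator measurableSet_Iio
    _ = ∫ x in Ioc s u ∩ Iic r, f x :=
        setIntegral_congr_set ((ae_eq_refl _).inter Iio_ae_eq_Iic)
    _ = ∫ x in Ioc s (min u r), f x := by rw [Ioc_inter_Iic]

section OneSub

variable {s t : ℝ}

theorem intervalIntegrable_div_one_sub (c : ℝ) (hs : s < 1) (ht : t < 1) :
    IntervalIntegrable (fun x => c / (1 - x)) volume s t := by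
  refine ContinuousOn.intervalIntegrable (continuousOn_const.div (by fun_prop) fun x hx => ?_)
  have : x < 1 := hx.2.trans_lt (max_lt hs ht)
  linarith

theorem integral_div_one_sub (c : ℝ) (hs : s < 1) (ht : t < 1) :
    ∫ x in s..t, c / (1 - x) = c * (Real.log (1 - s) - Real.log (1 - t)) := by
  simp only [div_eq_mul_one_div c, intervalIntegral.integral_const_mul]
  congr 1
  calc ∫ x in s..t, 1 / (1 - x) = ∫ y in 1 - t..1 - s, 1 / y :=
        integral_comp_sub_left (fun y => 1 / y) 1
    _ = Real.log ((1 - s) / (1 - t)) :=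
        integral_one_div (notMem_uIcc_of_lt (by linarith) (by linarith))
    _ = Real.log (1 - s) - Real.log (1 - t) := Real.log_div (by linarith) (by linarith)

theorem integral_div_one_sub_mul_self (c : ℝ) (hs : s < 1) (ht : t < 1) :
    ∫ x in s..t, c / (1 - x) * x = c * (Real.log (1 - s) - Real.log (1 - t)) - c * (t - s) := by
  have hsplit : EqOn (fun x => c / (1 - x) * x) (fun x => c / (1 - x) - c) (uIcc s t) := by
    intro x hx
    have : 1 - x ≠ 0 := by linarith [hx.2.trans_lt (max_lt hs ht)]
    field_simp
    ring
  rw [integral_congr hsplit,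
    integral_sub (intervalIntegrable_div_one_sub c hs ht) intervalIntegrable_const,
    integral_div_one_sub c hs ht, intervalIntegral.integral_const, smul_eq_mul]
  ring

theorem integral_div_one_sub_mul_min (c : ℝ) {a : ℝ} (hsa : s ≤ a) (hat : a ≤ t)
    (ht : t < 1) :
    ∫ x in s..t, c / (1 - x) * min a x
      = c * (Real.log (1 - s) - Real.log (1 - a)) - c * (a - s)
        + a * (c * (Real.log (1 - a) - Real.log (1 - t))) := by
  have ha : a < 1 := hat.trans_lt ht
  have hs : s < 1 := hsa.trans_lt ha
  have hint : ∀ {u v : ℝ}, u < 1 → v < 1 →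
      IntervalIntegrable (fun x => c / (1 - x) * min a x) volume u v := fun hu hv =>
    (intervalIntegrable_div_one_sub c hu hv).mul_continuousOn (by fun_prop)
  rw [← integral_add_adjacent_intervals (hint hs ha) (hint ha ht),
    ← integral_div_one_sub_mul_self c hs ha, ← integral_div_one_sub c ha ht,
    ← intervalIntegral.integral_const_mul]
  congr 1
  · refine integral_congr fun x hx => ?_
    rw [uIcc_of_le hsa] at hx
    simp only [min_eq_right hx.2]
  · refine integral_congr fun x hx => ?_
    rw [uIcc_of_le hat] at hx
    simp only [min_eq_left hx.1]
    ring

end OneSub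

theorem integral_mul_eq_of_eq_ite {P r : ℝ} {p : ℝ → ℝ}
    (hp : ∀ x ∈ Icc (0 : ℝ) 1, p x = if x < r then (1 + P) / (1 - x) else 0)
    (m : ℝ → ℝ) {s u : ℝ} (hs : 0 ≤ s) (hsu : s ≤ u) (hu : u ≤ 1) (hsr : s ≤ r) :
    ∫ x in s..u, p x * m x = ∫ x in s..min u r, (1 + P) / (1 - x) * m x := by
  rw [← integral_ite_lt hsu hsr]
  refine integral_congr fun x hx => ?_
  rw [uIcc_of_le hsu] at hx
  simp only [hp x ⟨hs.trans hx.1, hx.2.trans hu⟩, ite_mul, zero_mul]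

theorem stmt15 (P : ℝ) (hP : 0 ≤ P) (rmax : ℝ)
    (hrmax : rmax = 1 - Real.exp (-(1 / (P + 1))))
    (p : ℝ → ℝ)
    (hp : ∀ x ∈ Set.Icc (0 : ℝ) 1,
      p x = if x < rmax then (1 + P) / (1 - x) else 0) :
    (∫ x in (0 : ℝ)..1, p x) = 1 ∧
    (∫ x in (0 : ℝ)..1, x * p x) = 1 - (P + 1) * (1 - Real.exp (-(1 / (P + 1)))) ∧
    ∀ a ∈ Set.Icc (0 : ℝ) rmax,
      (∫ b in (0 : ℝ)..1, p b * min a b) + a * P = (1 - a) * ∫ b in (0 : ℝ)..a, p b := by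
  have hP1 : 0 < P + 1 := by linarith
  have hr1 : rmax < 1 := by rw [hrmax]; linarith [Real.exp_pos (-(1 / (P + 1)))]
  have hr0 : 0 ≤ rmax := by
    rw [hrmax, sub_nonneg, Real.exp_le_one_iff, neg_nonpos]; positivity
  have hlog : Real.log (1 - rmax) = -(1 / (P + 1)) := by simp [hrmax]
  have hmin : min 1 rmax = rmax := min_eq_right hr1.le
  have hmass : ∀ a ∈ Icc (0 : ℝ) 1,
      ∫ x in (0 : ℝ)..a, p x = ∫ x in (0 : ℝ)..min a rmax, (1 + P) / (1 - x) :=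
    fun a ha => by simpa using integral_mul_eq_of_eq_ite hp (fun _ => 1) le_rfl ha.1 ha.2 hr0
  refine ⟨?_, ?_, fun a ⟨ha0, har⟩ => ?_⟩
  · rw [hmass 1 ⟨zero_le_one, le_rfl⟩, hmin, integral_div_one_sub _ (by norm_num) hr1, hlog,
      sub_zero, Real.log_one]
    field_simp
    ring
  · simp_rw [mul_comm _ (p _)]
    rw [integral_mul_eq_of_eq_ite hp (fun x => x) le_rfl zero_le_one le_rfl hr0, hmin,
      integral_div_one_sub_mul_self _ (by norm_num) hr1, hlog, hrmax, sub_zero, Real.log_one]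
    field_simp
    ring
  · rw [integral_mul_eq_of_eq_ite hp (min a) le_rfl zero_le_one le_rfl hr0, hmin,
      integral_div_one_sub_mul_min _ ha0 har hr1, hmass a ⟨ha0, har.trans hr1.le⟩,
      min_eq_left har,
      integral_div_one_sub _ (by norm_num) (har.trans_lt hr1), hlog, sub_zero, Real.log_one]
    field_simp
    ring
end

section
/- Let K ⊆ ℝⁿ be a nonempty compact set with diameter d > 0, and for v ∈ ℝⁿ let W(v) = (sup_{x∈K} ⟨v,x⟩) − (inf_{x∈K} ⟨v,x⟩). Let v_1, …, v_m be independent standard Gaussian random vectors in ℝⁿ (each with independent N(0,1) coordinates), and let Z_1, …, Z_m be independent standard normal random variables. Then for every ε > 0, Pr[ Σ_{i=1}^m W(v_i)² < ε ] ≤ Pr[ Σ_{i=1}^m Z_i² < ε/d² ], i.e., the probability that the sum of squared random directional widths is below ε is bounded by the chi-squared (m degrees of freedom) distribution function evaluated at ε/d². -/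
/-!
Pick `p, q ∈ K` at distance `d = diam K` and let `u = (p - q) / d`. For every direction `w`,
`⟪w, p - q⟫ = d ⟪u, w⟫` is a difference of two values of `⟪w, ·⟫` on `K`, so `d² ⟪u, w⟫² ≤ W(w)²`.
Hence `Σ W(vᵢ)² < ε` forces `Σ ⟪u, vᵢ⟫² < ε / d²`. Since the law of each `vᵢ` is the rotation
invariant standard Gaussian and `u` is a unit vector, the `⟪u, vᵢ⟫` are independent standard
normal variables, i.e. they have the same joint law as the `Zᵢ`.
-/

open MeasureTheory ProbabilityTheory
open scoped RealInnerProductSpace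

lemma IsCompact.exists_dist_eq_diam {α : Type*} [PseudoMetricSpace α] {K : Set α}
    (hK : IsCompact K) (hne : K.Nonempty) : ∃ x ∈ K, ∃ y ∈ K, dist x y = Metric.diam K := by
  obtain ⟨z, hz, hmax⟩ := (hK.prod hK).exists_isMaxOn (hne.prod hne)
    (continuous_dist.comp (continuous_fst.prodMk continuous_snd)).continuousOn
  exact ⟨z.1, hz.1, z.2, hz.2, le_antisymm (Metric.dist_le_diam_of_mem hK.isBounded hz.1 hz.2)
    (Metric.diam_le_of_forall_dist_le dist_nonneg fun x hx y hy => hmax (Set.mk_mem_prod hx hy))⟩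

section Width

variable {E : Type*} [NormedAddCommGroup E] [InnerProductSpace ℝ E]

noncomputable def width (K : Set E) (w : E) : ℝ :=
  sSup ((fun x => ⟪w, x⟫) '' K) - sInf ((fun x => ⟪w, x⟫) '' K)

lemma inner_sub_le_width {K : Set E} (hK : IsCompact K) {x y : E} (hx : x ∈ K) (hy : y ∈ K)
    (w : E) : ⟪w, x - y⟫ ≤ width K w := by
  have hcpt : IsCompact ((fun z => ⟪w, z⟫) '' K) := hK.image (by fun_prop)
  rw [inner_sub_right, width]
  exact sub_le_sub (le_csSup hcpt.bddAbove ⟨x, hx, rfl⟩) (csInf_le hcpt.bddBelow ⟨y, hy, rfl⟩)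

lemma sq_inner_sub_le_sq_width {K : Set E} (hK : IsCompact K) {x y : E} (hx : x ∈ K)
    (hy : y ∈ K) (w : E) : ⟪w, x - y⟫ ^ 2 ≤ width K w ^ 2 := by
  refine sq_le_sq' ?_ (inner_sub_le_width hK hx hy w)
  rw [neg_le, ← inner_neg_right, neg_sub]
  exact inner_sub_le_width hK hy hx w

lemma exists_norm_eq_one_forall_diam_sq_mul_sq_inner_le {K : Set E} (hK : IsCompact K)
    (hne : K.Nonempty) (hdiam : 0 < Metric.diam K) :
    ∃ u : E, ‖u‖ = 1 ∧ ∀ w, Metric.diam K ^ 2 * ⟪u, w⟫ ^ 2 ≤ width K w ^ 2 := by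
  obtain ⟨x, hx, y, hy, hxy⟩ := hK.exists_dist_eq_diam hne
  refine ⟨(Metric.diam K)⁻¹ • (x - y), ?_, fun w => ?_⟩
  · rw [norm_smul, ← dist_eq_norm, hxy, norm_inv, Real.norm_of_nonneg hdiam.le,
      inv_mul_cancel₀ hdiam.ne']
  · calc Metric.diam K ^ 2 * ⟪(Metric.diam K)⁻¹ • (x - y), w⟫ ^ 2 = ⟪w, x - y⟫ ^ 2 := by
          rw [real_inner_smul_left, real_inner_comm]; field_simp
      _ ≤ width K w ^ 2 := sq_inner_sub_le_sq_width hK hx hy w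

end Width

section Gaussian

variable {E : Type*} [NormedAddCommGroup E] [InnerProductSpace ℝ E] [FiniteDimensional ℝ E]
  [MeasurableSpace E] [BorelSpace E]

lemma stdGaussian_map_innerSL (u : E) :
    (stdGaussian E).map (innerSL ℝ u) = gaussianReal 0 (‖u‖₊ ^ 2) := by
  rw [IsGaussian.map_eq_gaussianReal, integral_strongDual_stdGaussian,
    variance_dual_stdGaussian, innerSL_apply_norm]
  congr
  ext
  simp

end Gaussian

lemma map_fun_eq_pi_stdGaussian {ι κ Ω : Type*} [Fintype ι] [Fintype κ] [MeasurableSpace Ω]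
    {μ : Measure Ω} (v : ι → Ω → EuclideanSpace ℝ κ) (hv : ∀ i, Measurable (v i))
    (hlaw : ∀ i j, μ.map (fun ω => v i ω j) = gaussianReal 0 1)
    (hindep : iIndepFun (fun p : ι × κ => fun ω => v p.1 ω p.2) μ) :
    μ.map (fun ω i => v i ω) = Measure.pi fun _ => stdGaussian (EuclideanSpace ℝ κ) := by
  have hcoord : ∀ p : ι × κ, Measurable fun ω => v p.1 ω p.2 := fun p => by fun_prop
  have hjoint : μ.map (fun ω (p : ι × κ) => v p.1 ω p.2) =
      Measure.pi fun _ : ι × κ => gaussianReal 0 1 := by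
    rw [hindep.map_fun_eq_pi_map fun p => (hcoord p).aemeasurable]
    simp_rw [hlaw]
  have hcurry : (Measure.pi fun _ : ι × κ => gaussianReal 0 1).map Function.curry =
      Measure.pi fun _ : ι => Measure.pi fun _ : κ => gaussianReal 0 1 := by
    simpa only [Measure.infinitePi_eq_pi, MeasurableEquiv.coe_curry] using
      Measure.infinitePi_map_curry (X := ℝ) fun (_ : ι) (_ : κ) => gaussianReal 0 1
  have hsplit : (fun ω i => v i ω) =
      (fun g i => WithLp.toLp 2 (g i)) ∘ Function.curry ∘ fun ω (p : ι × κ) => v p.1 ω p.2 := by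
    rfl
  rw [hsplit, ← Measure.map_map (by fun_prop) (by fun_prop),
    ← Measure.map_map (by fun_prop) (by fun_prop), hjoint, hcurry,
    (measurePreserving_pi _ _ fun _ => ⟨by fun_prop, map_pi_eq_stdGaussian⟩).map_eq]

lemma map_fun_inner_eq_pi_gaussianReal {ι κ Ω : Type*} [Fintype ι] [Fintype κ]
    [MeasurableSpace Ω] {μ : Measure Ω} (v : ι → Ω → EuclideanSpace ℝ κ)
    (hv : ∀ i, Measurable (v i))
    (hlaw : ∀ i j, μ.map (fun ω => v i ω j) = gaussianReal 0 1)
    (hindep : iIndepFun (fun p : ι × κ => fun ω => v p.1 ω p.2) μ)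
    {u : EuclideanSpace ℝ κ} (hu : ‖u‖ = 1) :
    μ.map (fun ω i => ⟪u, v i ω⟫) = Measure.pi fun _ => gaussianReal 0 1 := by
  have hproj : MeasurePreserving (innerSL ℝ u) (stdGaussian (EuclideanSpace ℝ κ))
      (gaussianReal 0 1) := by
    refine ⟨by fun_prop, ?_⟩
    rw [stdGaussian_map_innerSL, show ‖u‖₊ = 1 from NNReal.eq hu, one_pow]
  rw [show (fun ω i => ⟪u, v i ω⟫) = (fun x i => innerSL ℝ u (x i)) ∘ fun ω i => v i ω
      from rfl, ← Measure.map_map (by fun_prop) (by fun_prop),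
    map_fun_eq_pi_stdGaussian v hv hlaw hindep, (measurePreserving_pi _ _ fun _ => hproj).map_eq]

theorem stmt18_general {n m : ℕ}
    (K : Set (EuclideanSpace ℝ (Fin n))) (hne : K.Nonempty) (hcomp : IsCompact K)
    (d : ℝ) (hd : d = Metric.diam K) (hdpos : 0 < d)
    (W : EuclideanSpace ℝ (Fin n) → ℝ)
    (hW : ∀ u, W u = sSup ((fun x => (inner ℝ u x : ℝ)) '' K) -
      sInf ((fun x => (inner ℝ u x : ℝ)) '' K))
    {Ω : Type*} [MeasurableSpace Ω] (μ : Measure Ω) [IsProbabilityMeasure μ]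
    (v : Fin m → Ω → EuclideanSpace ℝ (Fin n)) (Z : Fin m → Ω → ℝ)
    (hvmeas : ∀ i, Measurable (v i))
    -- each coordinate of each Gaussian vector is standard normal
    (hvlaw : ∀ i j, μ.map (fun ω => v i ω j) = gaussianReal 0 1)
    -- all coordinates of all the vectors are mutually independent
    (hvindep : iIndepFun
      (fun p : Fin m × Fin n => fun ω => v p.1 ω p.2) μ)
    (hZmeas : ∀ i, Measurable (Z i))
    (hZlaw : ∀ i, μ.map (Z i) = gaussianReal 0 1)
    (hZindep : iIndepFun Z μ)
    (ε : ℝ) :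
    μ {ω | (∑ i, W (v i ω) ^ 2) < ε} ≤ μ {ω | (∑ i, Z i ω ^ 2) < ε / d ^ 2} := by
  obtain rfl : W = width K := funext hW
  subst hd
  obtain ⟨u, hu, hwidth⟩ := exists_norm_eq_one_forall_diam_sq_mul_sq_inner_le hcomp hne hdpos
  have hsub : {ω | ∑ i, width K (v i ω) ^ 2 < ε} ⊆
      (fun ω i => ⟪u, v i ω⟫) ⁻¹' {t | ∑ i, t i ^ 2 < ε / Metric.diam K ^ 2} := fun ω hω => by
    rw [Set.mem_preimage, Set.mem_ofPred_eq, lt_div_iff₀' (by positivity), Finset.mul_sum]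
    exact (Finset.sum_le_sum fun i _ => hwidth (v i ω)).trans_lt hω
  have hlaw : μ.map (fun ω i => ⟪u, v i ω⟫) = μ.map (fun ω i => Z i ω) := by
    rw [map_fun_inner_eq_pi_gaussianReal v hvmeas hvlaw hvindep hu,
      hZindep.map_fun_eq_pi_map fun i => (hZmeas i).aemeasurable]
    simp_rw [hZlaw]
  have hset : MeasurableSet {t : Fin m → ℝ | ∑ i, t i ^ 2 < ε / Metric.diam K ^ 2} :=
    measurableSet_lt (by fun_prop) measurable_const
  calc _ ≤ μ ((fun ω i => ⟪u, v i ω⟫) ⁻¹' _) := measure_mono hsub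
    _ = μ {ω | ∑ i, Z i ω ^ 2 < ε / Metric.diam K ^ 2} := by
      rw [← Measure.map_apply (by fun_prop) hset, hlaw, Measure.map_apply (by fun_prop) hset]
      rfl

theorem stmt18 {n m : ℕ} (hm : 0 < m)
    (K : Set (EuclideanSpace ℝ (Fin n))) (hne : K.Nonempty) (hcomp : IsCompact K)
    (d : ℝ) (hd : d = Metric.diam K) (hdpos : 0 < d)
    (W : EuclideanSpace ℝ (Fin n) → ℝ)
    (hW : ∀ u, W u = sSup ((fun x => (inner ℝ u x : ℝ)) '' K) -
      sInf ((fun x => (inner ℝ u x : ℝ)) '' K))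
    {Ω : Type*} [MeasurableSpace Ω] (μ : Measure Ω) [IsProbabilityMeasure μ]
    (v : Fin m → Ω → EuclideanSpace ℝ (Fin n)) (Z : Fin m → Ω → ℝ)
    (hvmeas : ∀ i, Measurable (v i))
    -- each coordinate of each Gaussian vector is standard normal
    (hvlaw : ∀ i j, μ.map (fun ω => v i ω j) = gaussianReal 0 1)
    -- all coordinates of all the vectors are mutually independent
    (hvindep : iIndepFun
      (fun p : Fin m × Fin n => fun ω => v p.1 ω p.2) μ)
    (hZmeas : ∀ i, Measurable (Z i))
    (hZlaw : ∀ i, μ.map (Z i) = gaussianReal 0 1)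
    (hZindep : iIndepFun Z μ)
    (ε : ℝ) (hε : 0 < ε) :
    μ {ω | (∑ i, W (v i ω) ^ 2) < ε} ≤ μ {ω | (∑ i, Z i ω ^ 2) < ε / d ^ 2} :=
  stmt18_general K hne hcomp d hd hdpos W hW μ v Z hvmeas hvlaw hvindep hZmeas hZlaw hZindep ε
end

section
/- Let I and J be nonempty finite types and let M : I × J → ℝ be a joint probability distribution, i.e., M(i,j) ≥ 0 for all i, j and Σ_{i,j} M(i,j) = 1. Let p(i) = Σ_j M(i,j) and q(j) = Σ_i M(i,j) be its marginals. Then M(i,j) = p(i)·q(j) for all (i,j) ∈ I × J if and only if the rank of M, viewed as a matrix, is at most 1. Consequently, a correlated equilibrium of a finite two-player game (a joint distribution over action pairs) is a Nash equilibrium (a product of independent mixed strategies) if and only if its probability matrix has rank at most 1. -/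
/-!
A matrix has rank at most one exactly when it is an outer product `u vᵀ`. For such a matrix the
row sums are `u i * ∑ v`, the column sums are `(∑ u) * v j`, and their product is
`u i * v j * (∑ u * ∑ v)`, where the last factor is the total mass `1`.
-/

open Matrix Finset

theorem Matrix.rank_le_one_iff_exists_eq_vecMulVec {K m n : Type*} [Field K] [Fintype n]
    (A : Matrix m n K) : A.rank ≤ 1 ↔ ∃ (u : m → K) (v : n → K), A = vecMulVec u v := by
  refine ⟨fun hA => ?_, fun ⟨u, v, hA⟩ => hA ▸ rank_vecMulVec_le u v⟩
  have : Module.Finite K (Submodule.span K (Set.range A.col)) :=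
    FiniteDimensional.span_of_finite K (Set.finite_range _)
  rw [rank_eq_finrank_span_cols, finrank_le_one_iff] at hA
  obtain ⟨u, hu⟩ := hA
  choose v hv using fun j => hu ⟨A.col j, Submodule.subset_span ⟨j, rfl⟩⟩
  refine ⟨u, v, Matrix.ext fun i j => ?_⟩
  have hcol : v j * (u : m → K) i = A i j := by
    simpa only [SetLike.val_smul, Pi.smul_apply, smul_eq_mul, col_apply] using
      congr_fun (congrArg Subtype.val (hv j)) i
  rw [vecMulVec_apply, ← hcol, mul_comm]

theorem Matrix.vecMulVec_apply_eq_rowSum_mul_colSum {R m n : Type*} [CommSemiring R]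
    [Fintype m] [Fintype n] (u : m → R) (v : n → R)
    (hsum : ∑ i, ∑ j, vecMulVec u v i j = 1) (i : m) (j : n) :
    vecMulVec u v i j = (∑ j', vecMulVec u v i j') * ∑ i', vecMulVec u v i' j := by
  simp only [vecMulVec_apply, ← mul_sum, ← sum_mul] at hsum ⊢
  calc u i * v j = u i * v j * ((∑ i', u i') * ∑ j', v j') := by rw [hsum, mul_one]
    _ = _ := by ring

theorem stmt19_general {I J : Type*} [Fintype I] [Fintype J]
    (M : Matrix I J ℝ)
    (hsum : ∑ i, ∑ j, M i j = 1)
    (p : I → ℝ) (q : J → ℝ)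
    (hp : ∀ i, p i = ∑ j, M i j)
    (hq : ∀ j, q j = ∑ i, M i j) :
    (∀ i j, M i j = p i * q j) ↔ M.rank ≤ 1 := by
  rw [rank_le_one_iff_exists_eq_vecMulVec]
  constructor
  · exact fun hM => ⟨p, q, Matrix.ext hM⟩
  · rintro ⟨u, v, rfl⟩ i j
    rw [hp, hq]
    exact vecMulVec_apply_eq_rowSum_mul_colSum u v hsum i j

theorem stmt19 {I J : Type*} [Fintype I] [Fintype J] [Nonempty I] [Nonempty J]
    [DecidableEq I] [DecidableEq J]
    (M : Matrix I J ℝ)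
    (hnonneg : ∀ i j, 0 ≤ M i j)
    (hsum : ∑ i, ∑ j, M i j = 1)
    (p : I → ℝ) (q : J → ℝ)
    (hp : ∀ i, p i = ∑ j, M i j)
    (hq : ∀ j, q j = ∑ i, M i j) :
    (∀ i j, M i j = p i * q j) ↔ M.rank ≤ 1 :=
  stmt19_general M hsum p q hp hq
end
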